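/- arXiv:2202.01268 — 3 statements merged into one kernel-verified Lean document; each statement's English description precedes it below -/
import Mathlib

section
/- Partial participation compressor: Let C be an unbiased compressor in U(ω) on a probability space, let p' ∈ (0,1], and let β be a Bernoulli random variable with P(β = 1) = p', independent of C. Define the random map C_{p'} by C_{p'}(x) = (1/p')·C(x) if β = 1 and C_{p'}(x) = 0 if β = 0. Then C_{p'} ∈ U((ω+1)/p' − 1); that is, for every x ∈ ℝ^d, E[C_{p'}(x)] = x and E[‖C_{p'}(x) − x‖²] ≤ ((ω+1)/p' − 1)·‖x‖². -/
open MeasureTheory ProbabilityTheory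

noncomputable section

/-- `C` is an unbiased compressor with parameter `w` on the probability space `(Ω, μ)`:
it is a (jointly measurable, square-integrable) random map `ℝ^d → ℝ^d` such that
`E[C(x)] = x` and `E[‖C(x) - x‖²] ≤ w‖x‖²` for every `x`. -/
def UnbiasedComp {Ω : Type*} [MeasurableSpace Ω] {d : ℕ} (μ : Measure Ω)
    (C : EuclideanSpace ℝ (Fin d) → Ω → EuclideanSpace ℝ (Fin d)) (w : ℝ) : Prop :=
  Measurable (Function.uncurry C) ∧
    ∀ x : EuclideanSpace ℝ (Fin d),
      MemLp (C x) 2 μ ∧ (∫ ω, C x ω ∂μ) = x ∧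
        (∫ ω, ‖C x ω - x‖ ^ 2 ∂μ) ≤ w * ‖x‖ ^ 2

/-- Second moment expansion: `E‖Y - x‖² = E‖Y‖² - 2⟪E Y, x⟫ + ‖x‖²`. -/
lemma second_moment_expand {Ω : Type*} [MeasurableSpace Ω] (μ : Measure Ω)
    [IsProbabilityMeasure μ] {d : ℕ} (Y : Ω → EuclideanSpace ℝ (Fin d))
    (hY : MemLp Y 2 μ) (x : EuclideanSpace ℝ (Fin d)) :
    ∫ ω, ‖Y ω - x‖ ^ 2 ∂μ
      = (∫ ω, ‖Y ω‖ ^ 2 ∂μ) - 2 * (inner ℝ (∫ ω, Y ω ∂μ) x : ℝ) + ‖x‖ ^ 2 := by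
  have hYint : Integrable Y μ := hY.integrable one_le_two
  have h1 : Integrable (fun ω => ‖Y ω‖ ^ 2) μ :=
    (memLp_two_iff_integrable_sq_norm hY.1).1 hY
  have h2 : Integrable (fun ω => (inner ℝ (Y ω) x : ℝ)) μ := hYint.inner_const x
  have hexp : (fun ω => ‖Y ω - x‖ ^ 2)
      = fun ω => ‖Y ω‖ ^ 2 - 2 * (inner ℝ (Y ω) x : ℝ) + ‖x‖ ^ 2 := by
    funext ω; exact norm_sub_sq_real _ _
  rw [hexp]
  have h2' : Integrable (fun ω => 2 * (inner ℝ (Y ω) x : ℝ)) μ := h2.const_mul 2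
  have hsub : Integrable (fun ω => ‖Y ω‖ ^ 2 - 2 * (inner ℝ (Y ω) x : ℝ)) μ := h1.sub h2'
  rw [integral_add hsub (integrable_const _),
    integral_sub h1 h2', integral_const_mul, integral_const]
  have h3 : ∫ ω, (inner ℝ (Y ω) x : ℝ) ∂μ = (inner ℝ (∫ ω, Y ω ∂μ) x : ℝ) := by
    rw [real_inner_comm, ← integral_inner (𝕜 := ℝ) hYint x]
    exact integral_congr_ae (Filter.Eventually.of_forall fun ω => real_inner_comm _ _)
  rw [h3]
  simp

/-- **Partial participation compressor.** If `C ∈ U(w)` and `β` is an independent Bernoulli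
variable with success probability `p'`, then the map `x ↦ (1/p')·C(x)` if `β = 1` and `0`
otherwise is an unbiased compressor in `U((w+1)/p' - 1)`. -/
theorem partial_participation_compressor
    (d : ℕ) (hd : 1 ≤ d)
    {Ω : Type*} [MeasurableSpace Ω] (μ : Measure Ω) [IsProbabilityMeasure μ]
    (w : ℝ) (hw : 0 ≤ w)
    (C : EuclideanSpace ℝ (Fin d) → Ω → EuclideanSpace ℝ (Fin d))
    (hC : UnbiasedComp μ C w)
    (p' : ℝ) (hp'0 : 0 < p') (hp'1 : p' ≤ 1)
    (β : Ω → Bool) (hβmeas : Measurable β)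
    (hβp : μ {ω | β ω = true} = ENNReal.ofReal p')
    (hβindep : IndepFun β (fun ω (x : EuclideanSpace ℝ (Fin d)) => C x ω) μ)
    (Cp : EuclideanSpace ℝ (Fin d) → Ω → EuclideanSpace ℝ (Fin d))
    (hCp : ∀ x ω, Cp x ω = if β ω = true then (1 / p') • C x ω else 0) :
    UnbiasedComp μ Cp ((w + 1) / p' - 1) := by
  obtain ⟨hCmeas, hCx⟩ := hC
  have hp'ne : p' ≠ 0 := ne_of_gt hp'0
  set s : Set Ω := {ω | β ω = true} with hs_def
  have hsm : MeasurableSet s := hβmeas (measurableSet_singleton true)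
  have hμsreal : (μ s).toReal = p' := by
    rw [hβp, ENNReal.toReal_ofReal hp'0.le]
  -- the indicator of the Bernoulli event
  set f : Ω → ℝ := fun ω => if β ω = true then 1 else 0 with hf_def
  have hf_eq : f = s.indicator (fun _ => (1 : ℝ)) := by
    funext ω
    by_cases h : β ω = true <;> simp [hf_def, Set.indicator, hs_def, h]
  have hfint : Integrable f μ := by
    rw [hf_eq]; exact (integrable_const 1).indicator hsm
  have hfint_val : ∫ ω, f ω ∂μ = p' := by
    rw [hf_eq, integral_indicator_const _ hsm, measureReal_def, hμsreal, smul_eq_mul, mul_one]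
  -- independence of f with any measurable functional of `fun x => C x ω`
  have hindep : ∀ (G : (EuclideanSpace ℝ (Fin d) → EuclideanSpace ℝ (Fin d)) → ℝ),
      Measurable G → IndepFun f (fun ω => G (fun x => C x ω)) μ := by
    intro G hG
    exact hβindep.comp
      (Measurable.of_discrete (f := fun b : Bool => if b = true then (1:ℝ) else 0)) hG
  refine ⟨?_, fun x => ?_⟩
  · -- joint measurability
    have huncurry : Function.uncurry Cp = fun q : (EuclideanSpace ℝ (Fin d)) × Ω =>
        if β q.2 = true then (1 / p') • Function.uncurry C q else 0 :=
      funext fun q => hCp q.1 q.2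
    rw [huncurry]
    exact Measurable.ite ((hβmeas.comp measurable_snd) (measurableSet_singleton true))
      (hCmeas.const_smul (1 / p')) measurable_const
  obtain ⟨hmem, hmean, hvar⟩ := hCx x
  have hCxint : Integrable (C x) μ := hmem.integrable one_le_two
  have hCxsq : Integrable (fun ω => ‖C x ω‖ ^ 2) μ :=
    (memLp_two_iff_integrable_sq_norm hmem.1).1 hmem
  -- `Cp x` as indicator
  have hCpind : Cp x = s.indicator (fun ω => (1 / p') • C x ω) := by
    funext ω
    by_cases h : β ω = true <;> simp [hCp, Set.indicator, hs_def, h]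
  have hCpmem : MemLp (Cp x) 2 μ := by
    rw [hCpind]; exact (hmem.const_smul (1 / p') : MemLp (fun ω => (1 / p') • C x ω) 2 μ).indicator hsm
  have hCpint : Integrable (Cp x) μ := hCpmem.integrable one_le_two
  -- the mean of Cp x
  have hmean' : (∫ ω, Cp x ω ∂μ) = x := by
    ext i
    have hL := (EuclideanSpace.proj (𝕜 := ℝ) i).integral_comp_comm hCpint
    have hLC := (EuclideanSpace.proj (𝕜 := ℝ) i).integral_comp_comm hCxint
    have hGi : Measurable fun g : (EuclideanSpace ℝ (Fin d) → EuclideanSpace ℝ (Fin d)) =>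
        g x i :=
      (EuclideanSpace.proj (𝕜 := ℝ) i).measurable.comp (measurable_pi_apply x)
    have hgint : Integrable (fun ω => C x ω i) μ :=
      (EuclideanSpace.proj (𝕜 := ℝ) i).integrable_comp hCxint
    have hmul := (hindep _ hGi).integral_fun_mul_eq_mul_integral hfint.1 hgint.1
    have hcoord : (fun ω => Cp x ω i) = fun ω => (1 / p') * (f ω * C x ω i) := by
      funext ω
      by_cases h : β ω = true <;> simp [hCp, hf_def, h]
    have : ∫ ω, Cp x ω i ∂μ = x i := by
      rw [hcoord, integral_const_mul]
      have : ∫ ω, f ω * C x ω i ∂μ = p' * ∫ ω, C x ω i ∂μ := by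
        rw [← hfint_val]
        exact hmul
      rw [this]
      have hxi : ∫ ω, C x ω i ∂μ = x i := by
        simpa [hmean] using hLC
      rw [hxi]
      field_simp
    have hL' : ∫ ω, Cp x ω i ∂μ = (∫ ω, Cp x ω ∂μ) i := by simpa using hL
    exact hL'.symm.trans this
  refine ⟨hCpmem, hmean', ?_⟩
  -- second moment computation
  have hGn : Measurable fun g : (EuclideanSpace ℝ (Fin d) → EuclideanSpace ℝ (Fin d)) =>
      ‖g x‖ ^ 2 := ((measurable_pi_apply x).norm).pow_const 2
  have hmuln := (hindep _ hGn).integral_fun_mul_eq_mul_integral hfint.1 hCxsq.1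
  have hmuln' : ∫ ω, f ω * ‖C x ω‖ ^ 2 ∂μ = p' * ∫ ω, ‖C x ω‖ ^ 2 ∂μ := by
    rw [← hfint_val]; exact hmuln
  have hnormsq : (fun ω => ‖Cp x ω‖ ^ 2)
      = fun ω => (1 / p') ^ 2 * (f ω * ‖C x ω‖ ^ 2) := by
    funext ω
    by_cases h : β ω = true
    · simp only [hCp, hf_def, h, if_true, norm_smul, one_mul]
      rw [mul_pow, Real.norm_eq_abs, sq_abs]
    · simp [hCp, hf_def, h]
  have hCpsq : ∫ ω, ‖Cp x ω‖ ^ 2 ∂μ = (1 / p') * ∫ ω, ‖C x ω‖ ^ 2 ∂μ := by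
    rw [hnormsq, integral_const_mul, hmuln']
    field_simp
  -- bound the second moment of C x
  have hI : ∫ ω, ‖C x ω‖ ^ 2 ∂μ ≤ (w + 1) * ‖x‖ ^ 2 := by
    have h := second_moment_expand μ (C x) hmem x
    rw [hmean, real_inner_self_eq_norm_sq] at h
    nlinarith [hvar]
  have hsecond := second_moment_expand μ (Cp x) hCpmem x
  rw [hmean', real_inner_self_eq_norm_sq, hCpsq] at hsecond
  have hscale : (1 / p') * (∫ ω, ‖C x ω‖ ^ 2 ∂μ) ≤ (1 / p') * ((w + 1) * ‖x‖ ^ 2) :=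
    mul_le_mul_of_nonneg_left hI (by positivity)
  calc ∫ ω, ‖Cp x ω - x‖ ^ 2 ∂μ
      = (1 / p') * (∫ ω, ‖C x ω‖ ^ 2 ∂μ) - ‖x‖ ^ 2 := by rw [hsecond]; ring
    _ ≤ (1 / p') * ((w + 1) * ‖x‖ ^ 2) - ‖x‖ ^ 2 := by linarith
    _ = ((w + 1) / p' - 1) * ‖x‖ ^ 2 := by field_simp
end
end

section
/- Linear-rate recursion lemma under a PŁ-type inequality: Let μ > 0, γ ∈ (0, 1/μ), C ≥ 0, f* ∈ ℝ, and T ≥ 1 a natural number. Let F, G, Ψ : ℕ → ℝ be sequences such that Ψ_t ≥ 0 for all t ∈ {0,…,T}, G_t ≥ 2μ(F_t − f*) for all t ∈ {0,…,T−1}, and F_{t+1} + γΨ_{t+1} ≤ F_t − (γ/2)G_t + (1 − γμ)γΨ_t + γC for all t ∈ {0,…,T−1}. Then F_T − f* ≤ (1 − γμ)^T · ((F_0 − f*) + γΨ_0) + C/μ. (In the paper, F_t = E[f(x^t)] and G_t = E[‖∇f(x^t)‖²], with the PŁ condition providing G_t ≥ 2μ(F_t − f*).) -/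
/-- **Linear-rate recursion lemma under a PŁ-type inequality.** If `G_t ≥ 2μ(F_t - f*)` and
`F_{t+1} + γΨ_{t+1} ≤ F_t - (γ/2)G_t + (1 - γμ)γΨ_t + γC` for `t = 0,…,T-1`, with `Ψ_t ≥ 0`
on `{0,…,T}`, `μ > 0`, `γ ∈ (0, 1/μ)` and `C ≥ 0`, then
`F_T - f* ≤ (1 - γμ)^T ((F_0 - f*) + γΨ_0) + C/μ`. -/
theorem linear_rate_recursion_lemma
    (μ γ C fstar : ℝ) (hμ : 0 < μ) (hγ0 : 0 < γ) (hγ1 : γ < 1 / μ) (hC : 0 ≤ C)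
    (T : ℕ) (hT : 1 ≤ T)
    (F G Ψ : ℕ → ℝ)
    (hΨ : ∀ t ≤ T, 0 ≤ Ψ t)
    (hG : ∀ t < T, 2 * μ * (F t - fstar) ≤ G t)
    (hrec : ∀ t < T, F (t + 1) + γ * Ψ (t + 1)
      ≤ F t - γ / 2 * G t + (1 - γ * μ) * (γ * Ψ t) + γ * C) :
    F T - fstar ≤ (1 - γ * μ) ^ T * ((F 0 - fstar) + γ * Ψ 0) + C / μ := by
  have hq : 0 < 1 - γ * μ := by
    have := (lt_div_iff₀ hμ).mp hγ1
    nlinarith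
  -- key invariant
  have key : ∀ t ≤ T, F t - fstar + γ * Ψ t
      ≤ (1 - γ * μ) ^ t * ((F 0 - fstar) + γ * Ψ 0) + C / μ * (1 - (1 - γ * μ) ^ t) := by
    intro t ht
    induction t with
    | zero => simp
    | succ n ih =>
      have hn : n < T := Nat.lt_of_succ_le ht
      have ihn := ih (le_of_lt hn)
      have hstep : F (n + 1) - fstar + γ * Ψ (n + 1)
          ≤ (1 - γ * μ) * (F n - fstar + γ * Ψ n) + γ * C := by
        have h1 := hrec n hn
        have h2 := hG n hn
        nlinarith
      have hmul := mul_le_mul_of_nonneg_left ihn (le_of_lt hq)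
      have hexp : (1 - γ * μ) ^ (n + 1) = (1 - γ * μ) * (1 - γ * μ) ^ n := by ring
      have hCmu : (1 - γ * μ) * (C / μ * (1 - (1 - γ * μ) ^ n)) + γ * C
          = C / μ * (1 - (1 - γ * μ) ^ (n + 1)) := by
        field_simp
        ring
      calc F (n + 1) - fstar + γ * Ψ (n + 1)
          ≤ (1 - γ * μ) * (F n - fstar + γ * Ψ n) + γ * C := hstep
        _ ≤ (1 - γ * μ) * ((1 - γ * μ) ^ n * ((F 0 - fstar) + γ * Ψ 0)
              + C / μ * (1 - (1 - γ * μ) ^ n)) + γ * C := by linarith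
        _ = (1 - γ * μ) ^ (n + 1) * ((F 0 - fstar) + γ * Ψ 0)
              + C / μ * (1 - (1 - γ * μ) ^ (n + 1)) := by field_simp; ring
  have hfin := key T le_rfl
  have hΨT := hΨ T le_rfl
  have hpow : 0 ≤ (1 - γ * μ) ^ T := pow_nonneg (le_of_lt hq) T
  have hCm : 0 ≤ C / μ := div_nonneg hC hμ.le
  nlinarith [mul_le_mul_of_nonneg_left hpow hCm, mul_nonneg hγ0.le hΨT]
end

section
/- One-step variance bounds for the momentum variance-reduced (MVR) estimator: In the stochastic setting, fix x, x' ∈ ℝ^d and h_1,…,h_n ∈ ℝ^d with h = (1/n)∑_{i=1}^n h_i, and let b ∈ (0,1] and B ≥ 1. For each i let ξ_{i1},…,ξ_{iB} be i.i.d. random variables with law D_i, mutually independent across all i and j. Define h_i' = (1/B)∑_{j=1}^B ∇f_i(x';ξ_{ij}) + (1−b)(h_i − (1/B)∑_{j=1}^B ∇f_i(x;ξ_{ij})) and h' = (1/n)∑_{i=1}^n h_i'. Then: (1) E[‖h' − ∇f(x')‖²] ≤ 2b²σ²/(nB) + (2(1−b)²L_σ²/(nB))‖x' − x‖² + (1−b)²‖h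 − ∇f(x)‖²; (2) for every i, E[‖h_i' − ∇f_i(x')‖²] ≤ 2b²σ²/B + (2(1−b)²L_σ²/B)‖x' − x‖² + (1−b)²‖h_i − ∇f_i(x)‖²; (3) for every i, E[‖h_i' − h_i‖²] ≤ 2b²σ²/B + 2((1−b)²L_σ²/B + L_i²)‖x' − x‖² + 2b²‖h_i − ∇f_i(x)‖². -/
open MeasureTheory ProbabilityTheory

noncomputable section


lemma integrable_inner_of_memL2 {Ω : Type*} [MeasurableSpace Ω] {μ : Measure Ω}
    {E : Type*} [NormedAddCommGroup E] [InnerProductSpace ℝ E]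
    {f g : Ω → E} (hf : MemLp f 2 μ) (hg : MemLp g 2 μ) :
    Integrable (fun ω => (inner ℝ (f ω) (g ω) : ℝ)) μ := by
  have h1 : Integrable (fun ω => ‖f ω‖ ^ 2 + ‖g ω‖ ^ 2) μ :=
    ((memLp_two_iff_integrable_sq_norm hf.1).1 hf).add
      ((memLp_two_iff_integrable_sq_norm hg.1).1 hg)
  refine h1.mono' (hf.1.inner hg.1) ?_
  filter_upwards with ω
  have h2 := abs_real_inner_le_norm (f ω) (g ω)
  have h3 := norm_nonneg (f ω)
  have h4 := norm_nonneg (g ω)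
  rw [Real.norm_eq_abs]
  nlinarith

lemma indep_integral_inner_eq {Ω : Type*} [MeasurableSpace Ω] {μ : Measure Ω}
    [IsProbabilityMeasure μ] {d : ℕ}
    {X Y : Ω → EuclideanSpace ℝ (Fin d)} (hX : MemLp X 2 μ) (hY : MemLp Y 2 μ)
    (hXY : IndepFun X Y μ) :
    ∫ ω, (inner ℝ (X ω) (Y ω) : ℝ) ∂μ = (inner ℝ (∫ ω, X ω ∂μ) (∫ ω, Y ω ∂μ) : ℝ) := by
  have hXi : Integrable X μ := hX.integrable one_le_two
  have hYi : Integrable Y μ := hY.integrable one_le_two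
  have hproj : ∀ t : Fin d, Measurable (fun v : EuclideanSpace ℝ (Fin d) => v t) :=
    fun t => (EuclideanSpace.proj (𝕜 := ℝ) t).continuous.measurable
  have hXt : ∀ t : Fin d, Integrable (fun ω => X ω t) μ :=
    fun t => (EuclideanSpace.proj (𝕜 := ℝ) t).integrable_comp hXi
  have hYt : ∀ t : Fin d, Integrable (fun ω => Y ω t) μ :=
    fun t => (EuclideanSpace.proj (𝕜 := ℝ) t).integrable_comp hYi
  simp only [PiLp.inner_apply, RCLike.inner_apply, conj_trivial]
  simp only [fun ω t => mul_comm (Y ω t) (X ω t), fun t => mul_comm ((∫ ω, Y ω ∂μ) t) ((∫ ω, X ω ∂μ) t)]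
  rw [integral_finset_sum _ (fun t _ =>
    (show Integrable (fun ω => X ω t * Y ω t) μ from
      (hXY.comp (hproj t) (hproj t)).integrable_mul (hXt t) (hYt t)))]
  refine Finset.sum_congr rfl (fun t _ => ?_)
  have h1 : ∫ ω, X ω t * Y ω t ∂μ = (∫ ω, X ω t ∂μ) * (∫ ω, Y ω t ∂μ) :=
    (hXY.comp (hproj t) (hproj t)).integral_mul_eq_mul_integral (hXt t).1 (hYt t).1
  have h2 : ∫ ω, X ω t ∂μ = (∫ ω, X ω ∂μ) t :=
    (EuclideanSpace.proj (𝕜 := ℝ) t).integral_comp_comm hXi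
  have h3 : ∫ ω, Y ω t ∂μ = (∫ ω, Y ω ∂μ) t :=
    (EuclideanSpace.proj (𝕜 := ℝ) t).integral_comp_comm hYi
  rw [h1, h2, h3]

lemma sum_indep_norm_sq {Ω : Type*} [MeasurableSpace Ω] {μ : Measure Ω}
    [IsProbabilityMeasure μ] {d : ℕ} {ι : Type*} [Fintype ι]
    (X : ι → Ω → EuclideanSpace ℝ (Fin d))
    (hL2 : ∀ k, MemLp (X k) 2 μ)
    (hmean : ∀ k, ∫ ω, X k ω ∂μ = 0)
    (hind : ∀ k l, k ≠ l → IndepFun (X k) (X l) μ)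
    (c : EuclideanSpace ℝ (Fin d)) :
    ∫ ω, ‖(∑ k, X k ω) + c‖ ^ 2 ∂μ = (∑ k, ∫ ω, ‖X k ω‖ ^ 2 ∂μ) + ‖c‖ ^ 2 := by
  have hS2 : MemLp (fun ω => ∑ k, X k ω) 2 μ := by
    have h := memLp_finset_sum' (μ := μ) Finset.univ (fun k (_ : k ∈ Finset.univ) => hL2 k)
    convert h using 1
    funext ω
    simp
  have hSint : Integrable (fun ω => ∑ k, X k ω) μ := hS2.integrable one_le_two
  have hSmean : ∫ ω, ∑ k, X k ω ∂μ = 0 := by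
    rw [integral_finset_sum _ (fun k _ => (hL2 k).integrable one_le_two)]
    simp [hmean]
  have hptw : ∀ ω, ‖(∑ k, X k ω) + c‖ ^ 2
      = ‖∑ k, X k ω‖ ^ 2 + 2 * (inner ℝ (∑ k, X k ω) c : ℝ) + ‖c‖ ^ 2 :=
    fun ω => norm_add_sq_real _ _
  have I1 : Integrable (fun ω => ‖∑ k, X k ω‖ ^ 2) μ :=
    (memLp_two_iff_integrable_sq_norm hS2.1).1 hS2
  have I2 : Integrable (fun ω => 2 * (inner ℝ (∑ k, X k ω) c : ℝ)) μ :=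
    (hSint.inner_const c).const_mul 2
  have key : ∫ ω, ‖∑ k, X k ω‖ ^ 2 ∂μ = ∑ k, ∫ ω, ‖X k ω‖ ^ 2 ∂μ := by
    have hptw2 : ∀ ω, ‖∑ k, X k ω‖ ^ 2
        = ∑ k, ∑ l, (inner ℝ (X k ω) (X l ω) : ℝ) := by
      intro ω
      rw [← real_inner_self_eq_norm_sq, sum_inner]
      exact Finset.sum_congr rfl (fun k _ => inner_sum _ _ _)
    simp only [hptw2]
    rw [integral_finset_sum _ (fun k _ => integrable_finset_sum _
      (fun l _ => integrable_inner_of_memL2 (hL2 k) (hL2 l)))]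
    refine Finset.sum_congr rfl (fun k _ => ?_)
    rw [integral_finset_sum _ (fun l _ => integrable_inner_of_memL2 (hL2 k) (hL2 l))]
    rw [Finset.sum_eq_single_of_mem k (Finset.mem_univ k)]
    · rw [show (fun ω => (inner ℝ (X k ω) (X k ω) : ℝ)) = fun ω => ‖X k ω‖ ^ 2 from
        funext fun ω => real_inner_self_eq_norm_sq _]
    · intro l _ hlk
      rw [indep_integral_inner_eq (hL2 k) (hL2 l) (hind k l (Ne.symm hlk)),
        hmean k, hmean l, inner_zero_left]
  calc ∫ ω, ‖(∑ k, X k ω) + c‖ ^ 2 ∂μ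
      = ∫ ω, (‖∑ k, X k ω‖ ^ 2 + 2 * (inner ℝ (∑ k, X k ω) c : ℝ) + ‖c‖ ^ 2) ∂μ := by
        simp only [hptw]
    _ = (∫ ω, ‖∑ k, X k ω‖ ^ 2 ∂μ) + (∫ ω, 2 * (inner ℝ (∑ k, X k ω) c : ℝ) ∂μ)
        + ∫ ω, ‖c‖ ^ 2 ∂μ := by
        have I12 : Integrable
            (fun ω => ‖∑ k, X k ω‖ ^ 2 + 2 * (inner ℝ (∑ k, X k ω) c : ℝ)) μ := I1.add I2
        rw [integral_add I12 (integrable_const _), integral_add I1 I2]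
    _ = (∑ k, ∫ ω, ‖X k ω‖ ^ 2 ∂μ) + ‖c‖ ^ 2 := by
        rw [key, integral_const]
        have : ∫ ω, 2 * (inner ℝ (∑ k, X k ω) c : ℝ) ∂μ = 0 := by
          rw [integral_const_mul]
          have h5 : ∫ ω, (inner ℝ (∑ k, X k ω) c : ℝ) ∂μ
              = (inner ℝ c (∫ ω, ∑ k, X k ω ∂μ) : ℝ) := by
            rw [← integral_inner hSint c]
            simp only [real_inner_comm c]
          rw [h5, hSmean, inner_zero_right, mul_zero]
        rw [this]
        simp

lemma gradient_avg {d n : ℕ} {fi : Fin n → EuclideanSpace ℝ (Fin d) → ℝ}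
    {f : EuclideanSpace ℝ (Fin d) → ℝ}
    (hfdef : ∀ z, f z = (n : ℝ)⁻¹ * ∑ i, fi i z)
    (hdiff : ∀ i, Differentiable ℝ (fi i)) (x : EuclideanSpace ℝ (Fin d)) :
    gradient f x = (n : ℝ)⁻¹ • ∑ i, gradient (fi i) x := by
  have hfe : f = fun z => (n : ℝ)⁻¹ * ∑ i, fi i z := funext hfdef
  have hds : DifferentiableAt ℝ (fun z => ∑ i, fi i z) x := by
    apply DifferentiableAt.fun_sum
    exact fun i _ => (hdiff i).differentiableAt
  have h1 : fderiv ℝ f x = (n : ℝ)⁻¹ • ∑ i, fderiv ℝ (fi i) x := by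
    rw [hfe, fderiv_const_mul hds, fderiv_fun_sum fun i _ => (hdiff i).differentiableAt]
  have hg : ∀ (g : EuclideanSpace ℝ (Fin d) → ℝ) (y : EuclideanSpace ℝ (Fin d)),
      gradient g y = (InnerProductSpace.toDual ℝ _).symm (fderiv ℝ g y) := fun _ _ => rfl
  rw [hg, h1, _root_.map_smul, _root_.map_sum]
  simp only [hg]

set_option maxHeartbeats 2000000 in
/-- **One-step variance bounds for the momentum variance-reduced (MVR) estimator**
(stochastic setting). -/
theorem mvr_one_step_variance_bounds
    (d n B : ℕ) (hd : 1 ≤ d) (hn : 1 ≤ n) (hB : 1 ≤ B)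
    (fi : Fin n → EuclideanSpace ℝ (Fin d) → ℝ)
    (f : EuclideanSpace ℝ (Fin d) → ℝ)
    (hfdef : ∀ z, f z = (n : ℝ)⁻¹ * ∑ i, fi i z)
    (hdiff : ∀ i, Differentiable ℝ (fi i))
    (Li : Fin n → ℝ)
    (hLi : ∀ i x y, ‖gradient (fi i) x - gradient (fi i) y‖ ≤ Li i * ‖x - y‖)
    -- stochastic gradient oracles
    (Ξ : Fin n → Type*) [∀ i, MeasurableSpace (Ξ i)]
    (D : ∀ i, Measure (Ξ i)) [∀ i, IsProbabilityMeasure (D i)]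
    (sg : ∀ i, EuclideanSpace ℝ (Fin d) → Ξ i → EuclideanSpace ℝ (Fin d))
    (hsgMeas : ∀ i, Measurable (Function.uncurry (sg i)))
    (hsgL2 : ∀ i z, MemLp (sg i z) 2 (D i))
    (hsgUnbiased : ∀ i z, (∫ s, sg i z s ∂(D i)) = gradient (fi i) z)
    (σ : ℝ) (hσ : 0 ≤ σ)
    (hsgVar : ∀ i z, (∫ s, ‖sg i z s - gradient (fi i) z‖ ^ 2 ∂(D i)) ≤ σ ^ 2)
    (Lσ : ℝ) (hLσ : 0 ≤ Lσ)
    (hsgMS : ∀ i z y, (∫ s, ‖sg i z s - sg i y s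
        - (gradient (fi i) z - gradient (fi i) y)‖ ^ 2 ∂(D i)) ≤ Lσ ^ 2 * ‖z - y‖ ^ 2)
    -- probability space and samples
    {Ω : Type*} [MeasurableSpace Ω] (μ : Measure Ω) [IsProbabilityMeasure μ]
    (ξ : (i : Fin n) → Fin B → Ω → Ξ i)
    (hξmeas : ∀ i j, Measurable (ξ i j))
    (hξlaw : ∀ i j, Measure.map (ξ i j) μ = D i)
    (hindep : iIndep (fun q : Fin n × Fin B =>
      MeasurableSpace.comap (ξ q.1 q.2) inferInstance) μ)
    -- the MVR update
    (b : ℝ) (hb0 : 0 < b) (hb1 : b ≤ 1)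
    (x x' : EuclideanSpace ℝ (Fin d))
    (h : Fin n → EuclideanSpace ℝ (Fin d))
    (h' : Fin n → Ω → EuclideanSpace ℝ (Fin d))
    (hh' : ∀ i ω, h' i ω =
      (B : ℝ)⁻¹ • ∑ j : Fin B, sg i x' (ξ i j ω)
        + (1 - b) • (h i - (B : ℝ)⁻¹ • ∑ j : Fin B, sg i x (ξ i j ω))) :
    ((∫ ω, ‖(n : ℝ)⁻¹ • ∑ i, h' i ω - gradient f x'‖ ^ 2 ∂μ)
      ≤ 2 * b ^ 2 * σ ^ 2 / (n * B) + 2 * (1 - b) ^ 2 * Lσ ^ 2 / (n * B) * ‖x' - x‖ ^ 2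
        + (1 - b) ^ 2 * ‖(n : ℝ)⁻¹ • ∑ i, h i - gradient f x‖ ^ 2) ∧
    (∀ i, (∫ ω, ‖h' i ω - gradient (fi i) x'‖ ^ 2 ∂μ)
      ≤ 2 * b ^ 2 * σ ^ 2 / B + 2 * (1 - b) ^ 2 * Lσ ^ 2 / B * ‖x' - x‖ ^ 2
        + (1 - b) ^ 2 * ‖h i - gradient (fi i) x‖ ^ 2) ∧
    (∀ i, (∫ ω, ‖h' i ω - h i‖ ^ 2 ∂μ)
      ≤ 2 * b ^ 2 * σ ^ 2 / B
        + 2 * ((1 - b) ^ 2 * Lσ ^ 2 / B + Li i ^ 2) * ‖x' - x‖ ^ 2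
        + 2 * b ^ 2 * ‖h i - gradient (fi i) x‖ ^ 2) := by
  have hBpos : (0:ℝ) < (B:ℝ) := by exact_mod_cast hB
  have hnpos : (0:ℝ) < (n:ℝ) := by exact_mod_cast hn
  have hBne : (B : ℝ) ≠ 0 := ne_of_gt hBpos
  have hnne : (n : ℝ) ≠ 0 := ne_of_gt hnpos
  have hb1' : (0:ℝ) ≤ 1 - b := by linarith
  -- section measurability
  have hsgm : ∀ i z, Measurable (sg i z) := fun i z =>
    (hsgMeas i).comp measurable_prodMk_left
  -- centered one-sample vector
  set W : (i : Fin n) → Ξ i → EuclideanSpace ℝ (Fin d) :=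
    fun i s => sg i x' s - (1 - b) • sg i x s
      - (gradient (fi i) x' - (1 - b) • gradient (fi i) x) with hWdef
  have Wmeas : ∀ i, Measurable (W i) := fun i =>
    (((hsgm i x').sub ((hsgm i x).const_smul (1 - b))).sub measurable_const)
  have WL2 : ∀ i, MemLp (W i) 2 (D i) := fun i =>
    (((hsgL2 i x').sub ((hsgL2 i x).const_smul (1 - b))).sub (memLp_const _))
  have Wmean : ∀ i, ∫ s, W i s ∂(D i) = 0 := by
    intro i
    have h1 : Integrable (sg i x') (D i) := (hsgL2 i x').integrable one_le_two
    have h2 : Integrable (fun s => (1 - b) • sg i x s) (D i) :=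
      ((hsgL2 i x).integrable one_le_two).smul (1 - b)
    have h12 : Integrable (fun s => sg i x' s - (1 - b) • sg i x s) (D i) := h1.sub h2
    rw [hWdef]
    simp only
    rw [integral_sub h12 (integrable_const _), integral_sub h1 h2,
      integral_smul, integral_const, hsgUnbiased, hsgUnbiased]
    simp
  set V : ℝ := 2 * b ^ 2 * σ ^ 2 + 2 * (1 - b) ^ 2 * Lσ ^ 2 * ‖x' - x‖ ^ 2 with hVdef
  have Wvar : ∀ i, ∫ s, ‖W i s‖ ^ 2 ∂(D i) ≤ V := by
    intro i
    set A : Ξ i → EuclideanSpace ℝ (Fin d) :=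
      fun s => sg i x' s - gradient (fi i) x' with hAdef
    set Bf : Ξ i → EuclideanSpace ℝ (Fin d) :=
      fun s => sg i x' s - sg i x s - (gradient (fi i) x' - gradient (fi i) x) with hBfdef
    have hA2 : MemLp A 2 (D i) := (hsgL2 i x').sub (memLp_const _)
    have hB2 : MemLp Bf 2 (D i) :=
      ((hsgL2 i x').sub (hsgL2 i x)).sub (memLp_const _)
    have IA : Integrable (fun s => ‖A s‖ ^ 2) (D i) :=
      (memLp_two_iff_integrable_sq_norm hA2.1).1 hA2
    have IB : Integrable (fun s => ‖Bf s‖ ^ 2) (D i) :=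
      (memLp_two_iff_integrable_sq_norm hB2.1).1 hB2
    have IW : Integrable (fun s => ‖W i s‖ ^ 2) (D i) :=
      (memLp_two_iff_integrable_sq_norm (WL2 i).1).1 (WL2 i)
    have hptw : ∀ s, ‖W i s‖ ^ 2 ≤ 2 * b ^ 2 * ‖A s‖ ^ 2 + 2 * (1 - b) ^ 2 * ‖Bf s‖ ^ 2 := by
      intro s
      have hid : W i s = b • A s + (1 - b) • Bf s := by
        rw [hWdef, hAdef, hBfdef]
        simp only
        module
      have h1 : ‖W i s‖ ≤ b * ‖A s‖ + (1 - b) * ‖Bf s‖ := by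
        rw [hid]
        refine (norm_add_le _ _).trans ?_
        rw [norm_smul, norm_smul, Real.norm_eq_abs, Real.norm_eq_abs,
          abs_of_pos hb0, abs_of_nonneg hb1']
      have h2 : (0:ℝ) ≤ ‖W i s‖ := norm_nonneg _
      nlinarith [sq_nonneg (b * ‖A s‖ - (1 - b) * ‖Bf s‖), norm_nonneg (A s),
        norm_nonneg (Bf s), sq_nonneg (b * ‖A s‖ + (1 - b) * ‖Bf s‖)]
    have hIRHS : Integrable
        (fun s => 2 * b ^ 2 * ‖A s‖ ^ 2 + 2 * (1 - b) ^ 2 * ‖Bf s‖ ^ 2) (D i) :=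
      (IA.const_mul _).add (IB.const_mul _)
    calc ∫ s, ‖W i s‖ ^ 2 ∂(D i)
        ≤ ∫ s, (2 * b ^ 2 * ‖A s‖ ^ 2 + 2 * (1 - b) ^ 2 * ‖Bf s‖ ^ 2) ∂(D i) :=
          integral_mono IW hIRHS hptw
      _ = 2 * b ^ 2 * ∫ s, ‖A s‖ ^ 2 ∂(D i)
          + 2 * (1 - b) ^ 2 * ∫ s, ‖Bf s‖ ^ 2 ∂(D i) := by
          rw [integral_add (IA.const_mul _) (IB.const_mul _),
            integral_const_mul, integral_const_mul]
      _ ≤ 2 * b ^ 2 * σ ^ 2 + 2 * (1 - b) ^ 2 * (Lσ ^ 2 * ‖x' - x‖ ^ 2) := by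
          have e1 := hsgVar i x'
          have e2 := hsgMS i x' x
          have p1 : (0:ℝ) ≤ 2 * b ^ 2 := by positivity
          have p2 : (0:ℝ) ≤ 2 * (1 - b) ^ 2 := by positivity
          exact add_le_add (mul_le_mul_of_nonneg_left e1 p1)
            (mul_le_mul_of_nonneg_left e2 p2)
      _ = V := by rw [hVdef]; ring
  -- transfer to Ω
  set Z : Fin n × Fin B → Ω → EuclideanSpace ℝ (Fin d) :=
    fun q ω => W q.1 (ξ q.1 q.2 ω) with hZdef
  have Zmeas : ∀ q, Measurable (Z q) := fun q => (Wmeas q.1).comp (hξmeas q.1 q.2)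
  have ZL2 : ∀ q, MemLp (Z q) 2 μ := by
    intro q
    have h := WL2 q.1
    rw [← hξlaw q.1 q.2] at h
    exact (memLp_map_measure_iff (Wmeas q.1).aestronglyMeasurable
      (hξmeas q.1 q.2).aemeasurable).1 h
  have Zmean : ∀ q, ∫ ω, Z q ω ∂μ = 0 := by
    intro q
    have h := Wmean q.1
    rw [← hξlaw q.1 q.2, integral_map (hξmeas q.1 q.2).aemeasurable
      (Wmeas q.1).aestronglyMeasurable] at h
    exact h
  have Zvar : ∀ q, ∫ ω, ‖Z q ω‖ ^ 2 ∂μ ≤ V := by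
    intro q
    have h := Wvar q.1
    rw [← hξlaw q.1 q.2, integral_map (hξmeas q.1 q.2).aemeasurable
      (((Wmeas q.1).norm.pow_const 2).aestronglyMeasurable)] at h
    exact h
  have hiid : iIndepFun
      (fun q : Fin n × Fin B => ξ q.1 q.2) μ := hindep
  have Zindep : ∀ q q', q ≠ q' → IndepFun (Z q) (Z q') μ := by
    intro q q' hne
    exact (hiid.indepFun hne).comp (Wmeas q.1) (Wmeas q'.1)
  have hVnn : 0 ≤ V := by
    rw [hVdef]; positivity
  have hQ2 : ∀ (i : Fin n) (c : EuclideanSpace ℝ (Fin d)),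
      ∫ ω, ‖(∑ j : Fin B, (B:ℝ)⁻¹ • Z (i, j) ω) + c‖ ^ 2 ∂μ ≤ V / B + ‖c‖ ^ 2 := by
    intro i c
    have hXL2 : ∀ j : Fin B, MemLp (fun ω => (B:ℝ)⁻¹ • Z (i, j) ω) 2 μ :=
      fun j => (ZL2 (i, j)).const_smul ((B:ℝ)⁻¹)
    have hXmean : ∀ j : Fin B, ∫ ω, (B:ℝ)⁻¹ • Z (i, j) ω ∂μ = 0 := by
      intro j; rw [integral_smul, Zmean, smul_zero]
    have hXind : ∀ j l : Fin B, j ≠ l →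
        IndepFun (fun ω => (B:ℝ)⁻¹ • Z (i, j) ω) (fun ω => (B:ℝ)⁻¹ • Z (i, l) ω) μ := by
      intro j l hjl
      have hne : ((i, j) : Fin n × Fin B) ≠ (i, l) := by
        simp [Prod.ext_iff, hjl]
      exact (Zindep _ _ hne).comp (measurable_const_smul ((B:ℝ)⁻¹)) (measurable_const_smul ((B:ℝ)⁻¹))
    rw [sum_indep_norm_sq _ hXL2 hXmean hXind c]
    have hterm : ∀ j : Fin B, ∫ ω, ‖(B:ℝ)⁻¹ • Z (i, j) ω‖ ^ 2 ∂μ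
        ≤ ((B:ℝ)⁻¹) ^ 2 * V := by
      intro j
      have e : ∀ ω : Ω, ‖(B:ℝ)⁻¹ • Z (i, j) ω‖ ^ 2 = ((B:ℝ)⁻¹) ^ 2 * ‖Z (i, j) ω‖ ^ 2 := by
        intro ω
        rw [norm_smul, mul_pow, Real.norm_eq_abs, sq_abs]
      simp only [e]
      rw [integral_const_mul]
      exact mul_le_mul_of_nonneg_left (Zvar _) (by positivity)
    have hsum : (∑ j : Fin B, ∫ ω, ‖(B:ℝ)⁻¹ • Z (i, j) ω‖ ^ 2 ∂μ)
        ≤ (B:ℝ) * (((B:ℝ)⁻¹) ^ 2 * V) := by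
      calc (∑ j : Fin B, ∫ ω, ‖(B:ℝ)⁻¹ • Z (i, j) ω‖ ^ 2 ∂μ)
          ≤ ∑ _j : Fin B, ((B:ℝ)⁻¹) ^ 2 * V := Finset.sum_le_sum (fun j _ => hterm j)
        _ = (B:ℝ) * (((B:ℝ)⁻¹) ^ 2 * V) := by
            rw [Finset.sum_const, Finset.card_univ, Fintype.card_fin, nsmul_eq_mul]
    have heq : (B:ℝ) * (((B:ℝ)⁻¹) ^ 2 * V) = V / B := by
      field_simp
    linarith
  have hQ1 : ∀ c : EuclideanSpace ℝ (Fin d),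
      ∫ ω, ‖(∑ q : Fin n × Fin B, ((n:ℝ)⁻¹ * (B:ℝ)⁻¹) • Z q ω) + c‖ ^ 2 ∂μ
        ≤ V / (n * B) + ‖c‖ ^ 2 := by
    intro c
    have hXL2 : ∀ q, MemLp (fun ω => ((n:ℝ)⁻¹ * (B:ℝ)⁻¹) • Z q ω) 2 μ :=
      fun q => (ZL2 q).const_smul ((n:ℝ)⁻¹ * (B:ℝ)⁻¹)
    have hXmean : ∀ q, ∫ ω, ((n:ℝ)⁻¹ * (B:ℝ)⁻¹) • Z q ω ∂μ = 0 := by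
      intro q; rw [integral_smul, Zmean, smul_zero]
    have hXind : ∀ q q', q ≠ q' →
        IndepFun (fun ω => ((n:ℝ)⁻¹ * (B:ℝ)⁻¹) • Z q ω)
          (fun ω => ((n:ℝ)⁻¹ * (B:ℝ)⁻¹) • Z q' ω) μ := by
      intro q q' hne
      exact (Zindep _ _ hne).comp (measurable_const_smul ((n:ℝ)⁻¹ * (B:ℝ)⁻¹))
        (measurable_const_smul ((n:ℝ)⁻¹ * (B:ℝ)⁻¹))
    rw [sum_indep_norm_sq _ hXL2 hXmean hXind c]
    have hterm : ∀ q : Fin n × Fin B, ∫ ω, ‖((n:ℝ)⁻¹ * (B:ℝ)⁻¹) • Z q ω‖ ^ 2 ∂μ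
        ≤ ((n:ℝ)⁻¹ * (B:ℝ)⁻¹) ^ 2 * V := by
      intro q
      have e : ∀ ω : Ω, ‖((n:ℝ)⁻¹ * (B:ℝ)⁻¹) • Z q ω‖ ^ 2
          = ((n:ℝ)⁻¹ * (B:ℝ)⁻¹) ^ 2 * ‖Z q ω‖ ^ 2 := by
        intro ω
        rw [norm_smul, mul_pow, Real.norm_eq_abs, sq_abs]
      simp only [e]
      rw [integral_const_mul]
      exact mul_le_mul_of_nonneg_left (Zvar _) (by positivity)
    have hsum : (∑ q : Fin n × Fin B, ∫ ω, ‖((n:ℝ)⁻¹ * (B:ℝ)⁻¹) • Z q ω‖ ^ 2 ∂μ)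
        ≤ ((n:ℝ) * (B:ℝ)) * (((n:ℝ)⁻¹ * (B:ℝ)⁻¹) ^ 2 * V) := by
      calc (∑ q : Fin n × Fin B, ∫ ω, ‖((n:ℝ)⁻¹ * (B:ℝ)⁻¹) • Z q ω‖ ^ 2 ∂μ)
          ≤ ∑ _q : Fin n × Fin B, ((n:ℝ)⁻¹ * (B:ℝ)⁻¹) ^ 2 * V :=
            Finset.sum_le_sum (fun q _ => hterm q)
        _ = ((n:ℝ) * (B:ℝ)) * (((n:ℝ)⁻¹ * (B:ℝ)⁻¹) ^ 2 * V) := by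
            rw [Finset.sum_const, Finset.card_univ, Fintype.card_prod,
              Fintype.card_fin, Fintype.card_fin, nsmul_eq_mul]
            push_cast
            ring
    have heq : ((n:ℝ) * (B:ℝ)) * (((n:ℝ)⁻¹ * (B:ℝ)⁻¹) ^ 2 * V) = V / ((n:ℝ) * (B:ℝ)) := by
      field_simp
    have : V / ((n:ℝ) * (B:ℝ)) = V / (↑n * ↑B) := rfl
    linarith
  -- key algebraic identity
  have hsum_const : ∀ c : EuclideanSpace ℝ (Fin d), ∑ _j : Fin B, (B:ℝ)⁻¹ • c = c := by
    intro c
    rw [Finset.sum_const, Finset.card_univ, Fintype.card_fin,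
      ← Nat.cast_smul_eq_nsmul ℝ, smul_smul, mul_inv_cancel₀ hBne, one_smul]
  have hkey : ∀ (i : Fin n) (ω : Ω), h' i ω
      = (∑ j : Fin B, (B:ℝ)⁻¹ • Z (i, j) ω)
        + (gradient (fi i) x' + (1 - b) • (h i - gradient (fi i) x)) := by
    intro i ω
    have hterm : ∀ j : Fin B, (B:ℝ)⁻¹ • Z (i, j) ω
        = (B:ℝ)⁻¹ • sg i x' (ξ i j ω) - (1 - b) • ((B:ℝ)⁻¹ • sg i x (ξ i j ω))
          - (B:ℝ)⁻¹ • (gradient (fi i) x' - (1 - b) • gradient (fi i) x) := by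
      intro j
      rw [hZdef, hWdef]
      simp only
      module
    rw [Finset.sum_congr rfl (fun j _ => hterm j), Finset.sum_sub_distrib,
      Finset.sum_sub_distrib, hsum_const, ← Finset.smul_sum, ← Finset.smul_sum,
      ← Finset.smul_sum, hh']
    module
  -- part 2
  have part2 : ∀ i, (∫ ω, ‖h' i ω - gradient (fi i) x'‖ ^ 2 ∂μ)
      ≤ 2 * b ^ 2 * σ ^ 2 / B + 2 * (1 - b) ^ 2 * Lσ ^ 2 / B * ‖x' - x‖ ^ 2
        + (1 - b) ^ 2 * ‖h i - gradient (fi i) x‖ ^ 2 := by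
    intro i
    have hident : ∀ ω : Ω, h' i ω - gradient (fi i) x'
        = (∑ j : Fin B, (B:ℝ)⁻¹ • Z (i, j) ω) + (1 - b) • (h i - gradient (fi i) x) := by
      intro ω
      rw [hkey i ω]
      module
    simp only [hident]
    have hc : ‖(1 - b) • (h i - gradient (fi i) x)‖ ^ 2
        = (1 - b) ^ 2 * ‖h i - gradient (fi i) x‖ ^ 2 := by
      rw [norm_smul, mul_pow, Real.norm_eq_abs, sq_abs]
    have hle := hQ2 i ((1 - b) • (h i - gradient (fi i) x))
    rw [hc] at hle
    refine hle.trans (le_of_eq ?_)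
    rw [hVdef]
    ring
  -- part 3
  have part3 : ∀ i, (∫ ω, ‖h' i ω - h i‖ ^ 2 ∂μ)
      ≤ 2 * b ^ 2 * σ ^ 2 / B
        + 2 * ((1 - b) ^ 2 * Lσ ^ 2 / B + Li i ^ 2) * ‖x' - x‖ ^ 2
        + 2 * b ^ 2 * ‖h i - gradient (fi i) x‖ ^ 2 := by
    intro i
    have hident : ∀ ω : Ω, h' i ω - h i
        = (∑ j : Fin B, (B:ℝ)⁻¹ • Z (i, j) ω)
          + (gradient (fi i) x' - gradient (fi i) x - b • (h i - gradient (fi i) x)) := by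
      intro ω
      rw [hkey i ω]
      module
    simp only [hident]
    have hle := hQ2 i (gradient (fi i) x' - gradient (fi i) x - b • (h i - gradient (fi i) x))
    refine hle.trans ?_
    have h2 := hLi i x' x
    have h1 : ‖gradient (fi i) x' - gradient (fi i) x - b • (h i - gradient (fi i) x)‖
        ≤ ‖gradient (fi i) x' - gradient (fi i) x‖ + b * ‖h i - gradient (fi i) x‖ := by
      refine (norm_sub_le _ _).trans ?_
      rw [norm_smul, Real.norm_eq_abs, abs_of_pos hb0]
    have h3 : ‖gradient (fi i) x' - gradient (fi i) x‖ ^ 2 ≤ (Li i * ‖x' - x‖) ^ 2 :=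
      pow_le_pow_left₀ (norm_nonneg _) h2 2
    have hcb : ‖gradient (fi i) x' - gradient (fi i) x - b • (h i - gradient (fi i) x)‖ ^ 2
        ≤ 2 * (Li i) ^ 2 * ‖x' - x‖ ^ 2 + 2 * b ^ 2 * ‖h i - gradient (fi i) x‖ ^ 2 := by
      nlinarith [norm_nonneg (gradient (fi i) x' - gradient (fi i) x - b • (h i - gradient (fi i) x)),
        norm_nonneg (gradient (fi i) x' - gradient (fi i) x),
        norm_nonneg (h i - gradient (fi i) x),
        sq_nonneg (‖gradient (fi i) x' - gradient (fi i) x‖ - b * ‖h i - gradient (fi i) x‖)]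
    have : V / B + ‖gradient (fi i) x' - gradient (fi i) x - b • (h i - gradient (fi i) x)‖ ^ 2
        ≤ V / B + (2 * (Li i) ^ 2 * ‖x' - x‖ ^ 2 + 2 * b ^ 2 * ‖h i - gradient (fi i) x‖ ^ 2) :=
      by linarith [hcb]
    refine this.trans (le_of_eq ?_)
    rw [hVdef]
    ring
  -- part 1
  have hgradf : ∀ y, gradient f y = (n:ℝ)⁻¹ • ∑ i, gradient (fi i) y :=
    fun y => gradient_avg hfdef hdiff y
  have part1 : (∫ ω, ‖(n : ℝ)⁻¹ • ∑ i, h' i ω - gradient f x'‖ ^ 2 ∂μ)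
      ≤ 2 * b ^ 2 * σ ^ 2 / (n * B) + 2 * (1 - b) ^ 2 * Lσ ^ 2 / (n * B) * ‖x' - x‖ ^ 2
        + (1 - b) ^ 2 * ‖(n : ℝ)⁻¹ • ∑ i, h i - gradient f x‖ ^ 2 := by
    have hident : ∀ ω : Ω, (n : ℝ)⁻¹ • ∑ i, h' i ω - gradient f x'
        = (∑ q : Fin n × Fin B, ((n:ℝ)⁻¹ * (B:ℝ)⁻¹) • Z q ω)
          + (1 - b) • ((n : ℝ)⁻¹ • ∑ i, h i - gradient f x) := by
      intro ω
      rw [hgradf, hgradf]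
      simp only [hkey, Fintype.sum_prod_type, mul_smul, Finset.sum_add_distrib,
        Finset.sum_sub_distrib, ← Finset.smul_sum, smul_add, smul_sub]
      module
    simp only [hident]
    have hc : ‖(1 - b) • ((n : ℝ)⁻¹ • ∑ i, h i - gradient f x)‖ ^ 2
        = (1 - b) ^ 2 * ‖(n : ℝ)⁻¹ • ∑ i, h i - gradient f x‖ ^ 2 := by
      rw [norm_smul, mul_pow, Real.norm_eq_abs, sq_abs]
    have hle := hQ1 ((1 - b) • ((n : ℝ)⁻¹ • ∑ i, h i - gradient f x))
    rw [hc] at hle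
    refine hle.trans (le_of_eq ?_)
    rw [hVdef]
    ring
  exact ⟨part1, part2, part3⟩
end
end
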